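/- Let X be a real Banach space. Then the following are equivalent: (1) every convex combination of slices of the closed unit ball B_X intersects the unit sphere S_X; (2) for every convex combination of slices C of B_X there exist x, y ∈ C with ‖x − y‖ = 2. -/

import Mathlib

open Metric Set

/-- A slice of the closed unit ball of `X`: the set of points of the ball where a
norm-one functional `f` is larger than `1 - α`, for some `α > 0`. -/
def IsSlice {X : Type*} [NormedAddCommGroup X] [NormedSpace ℝ X] (S : Set X) : Prop :=
  ∃ (f : X →L[ℝ] ℝ) (α : ℝ), ‖f‖ = 1 ∧ 0 < α ∧
    S = {x : X | ‖x‖ ≤ 1 ∧ 1 - α < f x}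

/-- A convex combination of slices of the closed unit ball of `X`. -/
def IsCCS {X : Type*} [NormedAddCommGroup X] [NormedSpace ℝ X] (C : Set X) : Prop :=
  ∃ (n : ℕ) (lam : Fin n → ℝ) (S : Fin n → Set X),
    0 < n ∧ (∀ i, 0 ≤ lam i ∧ lam i ≤ 1) ∧ (∑ i, lam i) = 1 ∧
    (∀ i, IsSlice (S i)) ∧
    C = {z : X | ∃ x : Fin n → X, (∀ i, x i ∈ S i) ∧ z = ∑ i, lam i • x i}

/-!
Pairing each slice `S(f, α)` with the opposite slice `S(-f, α) = -S(f, α)` turns a convex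
combination of slices `C` into the convex combination of slices `½ C + ½ (-C)`. A point of norm
one in it has the form `½ (u - w)` with `u, w ∈ C`, so `‖u - w‖ = 2`. Conversely, two points of
the unit ball at distance `2` both lie on the unit sphere.
-/

section

open scoped Pointwise

variable {X : Type*} [NormedAddCommGroup X] [NormedSpace ℝ X]

lemma IsSlice.subset_closedBall {S : Set X} (hS : IsSlice S) : S ⊆ closedBall 0 1 := by
  obtain ⟨f, α, -, -, rfl⟩ := hS
  intro x hx
  simpa using hx.1

lemma IsSlice.neg {S : Set X} (hS : IsSlice S) : IsSlice (-S) := by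
  obtain ⟨f, α, hf, hα, rfl⟩ := hS
  refine ⟨-f, α, by rw [norm_neg, hf], hα, ?_⟩
  ext x
  simp

lemma setOf_sum_smul_mem_eq_sum_smul {n : ℕ} (lam : Fin n → ℝ) (S : Fin n → Set X) :
    {z : X | ∃ x : Fin n → X, (∀ i, x i ∈ S i) ∧ z = ∑ i, lam i • x i} = ∑ i, lam i • S i := by
  ext z
  rw [mem_ofPred_eq, mem_fintype_sum]
  constructor
  · rintro ⟨x, hx, rfl⟩
    exact ⟨fun i => lam i • x i, fun i => smul_mem_smul_set (hx i), rfl⟩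
  · rintro ⟨g, hg, rfl⟩
    choose x hx hgx using fun i => mem_smul_set.1 (hg i)
    exact ⟨x, hx, by simp only [hgx]⟩

lemma isCCS_iff {C : Set X} :
    IsCCS C ↔ ∃ (n : ℕ) (lam : Fin n → ℝ) (S : Fin n → Set X),
      0 < n ∧ (∀ i, 0 ≤ lam i ∧ lam i ≤ 1) ∧ (∑ i, lam i) = 1 ∧
      (∀ i, IsSlice (S i)) ∧ C = ∑ i, lam i • S i := by
  simp only [IsCCS, setOf_sum_smul_mem_eq_sum_smul]

lemma IsCCS.subset_closedBall {C : Set X} (hC : IsCCS C) : C ⊆ closedBall 0 1 := by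
  obtain ⟨n, lam, S, -, hlam, hsum, hS, rfl⟩ := hC
  rintro _ ⟨x, hx, rfl⟩
  exact (convex_closedBall 0 1).sum_mem (fun i _ => (hlam i).1) hsum
    (fun i _ => (hS i).subset_closedBall (hx i))

lemma IsCCS.neg {C : Set X} (hC : IsCCS C) : IsCCS (-C) := by
  obtain ⟨n, lam, S, hn, hlam, hsum, hS, rfl⟩ := isCCS_iff.1 hC
  refine isCCS_iff.2 ⟨n, lam, fun i => -S i, hn, hlam, hsum, fun i => (hS i).neg, ?_⟩
  simp only [← Finset.sum_neg_distrib, smul_set_neg]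

lemma IsCCS.smul_add_smul {C D : Set X} (hC : IsCCS C) (hD : IsCCS D) {a b : ℝ}
    (ha : 0 ≤ a) (hb : 0 ≤ b) (hab : a + b = 1) : IsCCS (a • C + b • D) := by
  obtain ⟨n, lam, S, hn, hlam, hsum, hS, rfl⟩ := isCCS_iff.1 hC
  obtain ⟨m, mu, T, -, hmu, hsum', hT, rfl⟩ := isCCS_iff.1 hD
  refine isCCS_iff.2 ⟨n + m, Fin.addCases (fun i => a * lam i) (fun j => b * mu j),
    Fin.addCases S T, by omega, ?_, ?_, ?_, ?_⟩
  · refine Fin.addCases (fun i => ?_) (fun j => ?_)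
    · simp only [Fin.addCases_left]
      constructor <;> nlinarith [hlam i]
    · simp only [Fin.addCases_right]
      constructor <;> nlinarith [hmu j]
  · simp only [Fin.sum_univ_add, Fin.addCases_left, Fin.addCases_right, ← Finset.mul_sum,
      hsum, hsum', hab, mul_one]
  · exact Fin.addCases (fun i => by simpa using hS i) (fun j => by simpa using hT j)
  · simp only [Fin.sum_univ_add, Fin.addCases_left, Fin.addCases_right, Finset.smul_sum,
      smul_smul]

end

theorem ccs_meets_sphere_iff_diam_attained_general
    {X : Type*} [NormedAddCommGroup X] [NormedSpace ℝ X] :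
    (∀ C : Set X, IsCCS C → (C ∩ sphere (0 : X) 1).Nonempty) ↔
      (∀ C : Set X, IsCCS C → ∃ x ∈ C, ∃ y ∈ C, ‖x - y‖ = 2) := by
  constructor
  · intro h C hC
    have hD := hC.smul_add_smul hC.neg (a := 1 / 2) (b := 1 / 2) (by norm_num) (by norm_num)
      (by norm_num)
    obtain ⟨_, ⟨_, ⟨u, hu, rfl⟩, _, ⟨v, hv, rfl⟩, rfl⟩, hz⟩ := h _ hD
    rw [mem_sphere_zero_iff_norm] at hz
    refine ⟨u, hu, -v, hv, ?_⟩
    calc ‖u - -v‖ = ‖(2 : ℝ) • ((1 / 2 : ℝ) • u + (1 / 2 : ℝ) • v)‖ := by congr 1; module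
      _ = 2 := by rw [norm_smul, hz]; norm_num
  · intro h C hC
    obtain ⟨x, hx, y, hy, hxy⟩ := h C hC
    have hx1 := mem_closedBall_zero_iff.1 (hC.subset_closedBall hx)
    have hy1 := mem_closedBall_zero_iff.1 (hC.subset_closedBall hy)
    refine ⟨x, hx, mem_sphere_zero_iff_norm.2 ?_⟩
    linarith [norm_sub_le x y]

theorem ccs_meets_sphere_iff_diam_attained
    {X : Type*} [NormedAddCommGroup X] [NormedSpace ℝ X] [CompleteSpace X] :
    (∀ C : Set X, IsCCS C → (C ∩ sphere (0 : X) 1).Nonempty) ↔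
      (∀ C : Set X, IsCCS C → ∃ x ∈ C, ∃ y ∈ C, ‖x - y‖ = 2) :=
  ccs_meets_sphere_iff_diam_attained_general
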